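/- Let D be a pretannakian category over k. Assume: (i) D is subterminal, i.e. for every pretannakian category C over k, any two tensor functors C → D are isomorphic as symmetric monoidal functors; and (ii) D is a Bezrukavnikov category, i.e. for every surjective tensor functor C₁ → C₂ between pretannakian categories over k and every tensor functor C₁ → D, there exists a tensor functor C₂ → D. Then D is incompressible: every surjective tensor functor from D to a pretannakian category over k is an equivalence (equivalently, every tensor functor out of D is injective). -/

import Mathlib

open CategoryTheory CategoryTheory.Limits CategoryTheory.MonoidalCategory

universe u

/-- A pretannakian category over `k`: a (small, up to equivalence every essentially small
category is of this form) symmetric monoidal `k`-linear abelian rigid category in which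
`k ⟶ End (𝟙)` is bijective and every object has finite length. -/
structure PreTannakian (k : Type u) [Field k] where
  C : Type u
  [cat : SmallCategory C]
  [abelian : Abelian C]
  [linear : Linear k C]
  [monoidal : MonoidalCategory C]
  [symmetric : SymmetricCategory C]
  [monoidalPreadditive : MonoidalPreadditive C]
  [monoidalLinear : MonoidalLinear k C]
  [rigid : RigidCategory C]
  endBij : Function.Bijective fun a : k => a • (𝟙 (𝟙_ C))
  finiteLength : ∀ X : C, IsNoetherianObject X ∧ IsArtinianObject X

attribute [instance] PreTannakian.cat PreTannakian.abelian PreTannakian.linear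
  PreTannakian.monoidal PreTannakian.symmetric PreTannakian.monoidalPreadditive
  PreTannakian.monoidalLinear PreTannakian.rigid

/-- A tensor functor between pretannakian categories over `k`: a `k`-linear exact symmetric
strong monoidal functor. -/
structure TensorFunctor {k : Type u} [Field k] (C D : PreTannakian k) where
  toFunctor : C.C ⥤ D.C
  [additive : toFunctor.Additive]
  [linear : toFunctor.Linear k]
  [braided : toFunctor.Braided]
  [preservesFiniteLimits : PreservesFiniteLimits toFunctor]
  [preservesFiniteColimits : PreservesFiniteColimits toFunctor]

attribute [instance] TensorFunctor.additive TensorFunctor.linear TensorFunctor.braided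
  TensorFunctor.preservesFiniteLimits TensorFunctor.preservesFiniteColimits

/-- `W` is a subquotient of `Z`: a quotient of a subobject of `Z`. -/
def IsSubquotient {A : Type u} [Category A] (W Z : A) : Prop :=
  ∃ (S : A) (i : S ⟶ Z) (p : S ⟶ W), Mono i ∧ Epi p

/-- A tensor functor is surjective if every object of the target is a subquotient of an
object in the image. -/
def TensorFunctor.Surjective {k : Type u} [Field k] {C D : PreTannakian k}
    (F : TensorFunctor C D) : Prop :=
  ∀ Z : D.C, ∃ X : C.C, IsSubquotient Z (F.toFunctor.obj X)

/-!
Bezrukavnikov's property applied to `𝟭 D` and a surjective `F : D ⥤ C` yields a tensor functor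
`G : C ⥤ D`, and subterminality gives `F ⋙ G ≅ 𝟭 D`. Tensor functors are faithful: the unit of a
pretannakian category is simple, so the coevaluation of a nonzero object is a monomorphism out of
`𝟙`, which no tensor functor can kill. Hence `F` is fully faithful. A subobject `S ↪ F X` is
compared with `F (G S) ↪ F X`, coming from `G S ↪ G (F X) ≅ X`; the two agree after applying the
faithful exact functor `G`, hence already in `C`. So the essential image of `F` is closed under
subobjects, and, `F` being right exact, under cokernels, so it contains all subquotients of
objects `F X`, i.e. everything.
-/

namespace CategoryTheory

section Rigid

variable {C : Type*} [Category C] [MonoidalCategory C]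

instance isLeftAdjoint_tensorRight (X : C) [HasRightDual X] : (tensorRight X).IsLeftAdjoint :=
  (tensorRightAdjunction X Xᘁ).isLeftAdjoint

instance isRightAdjoint_tensorRight (X : C) [HasLeftDual X] : (tensorRight X).IsRightAdjoint :=
  (tensorRightAdjunction (ᘁX) X).isRightAdjoint

instance isLeftAdjoint_tensorLeft (X : C) [HasLeftDual X] : (tensorLeft X).IsLeftAdjoint :=
  (tensorLeftAdjunction (ᘁX) X).isLeftAdjoint

instance isRightAdjoint_tensorLeft (X : C) [HasRightDual X] : (tensorLeft X).IsRightAdjoint :=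
  (tensorLeftAdjunction X Xᘁ).isRightAdjoint

lemma isSplitEpi_of_isSplitEpi_whiskerRight {B Q Q' : C} [ExactPairing Q Q'] (g : B ⟶ Q)
    [IsSplitEpi (g ▷ Q')] : IsSplitEpi g := by
  let e := tensorRightHomEquiv (𝟙_ C) Q Q'
  have he : ∀ x : 𝟙_ C ⟶ B ⊗ Q', (e B).symm x ≫ g = (e Q).symm (x ≫ g ▷ Q') := fun x => by
    rw [Equiv.eq_symm_apply, tensorRightHomEquiv_naturality, Equiv.apply_symm_apply]
  refine ⟨⟨(λ_ Q).inv ≫ (e B).symm (e Q (λ_ Q).hom ≫ section_ (g ▷ Q')), ?_⟩⟩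
  rw [Category.assoc, he, Category.assoc, IsSplitEpi.id, Category.comp_id, Equiv.symm_apply_apply,
    Iso.inv_hom_id]

end Rigid

section Preadditive

variable {C : Type*} [Category C] [Preadditive C] [MonoidalCategory C] [MonoidalPreadditive C]

lemma isZero_tensor_tensor_right {U Y : C} (h : IsZero (U ⊗ Y)) (W : C) :
    IsZero (U ⊗ (Y ⊗ W)) :=
  ((tensorRight W).map_isZero h).of_iso (α_ U Y W).symm

lemma isZero_tensor_tensor_left [BraidedCategory C] {U Y : C} (h : IsZero (U ⊗ Y)) (W : C) :
    IsZero (U ⊗ (W ⊗ Y)) :=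
  (isZero_tensor_tensor_right h W).of_iso (whiskerLeftIso U (β_ W Y))

lemma isZero_tensor_rightDual [BraidedCategory C] {U X : C} [HasRightDual X]
    (h : IsZero (U ⊗ X)) : IsZero (U ⊗ Xᘁ) := by
  have hzero : U ◁ Xᘁ ◁ η_ X Xᘁ = 0 :=
    (isZero_tensor_tensor_left (isZero_tensor_tensor_right h Xᘁ) Xᘁ).eq_of_tgt _ _
  rw [IsZero.iff_id_eq_zero]
  calc 𝟙 (U ⊗ Xᘁ)
      = U ◁ ((ρ_ _).inv ≫ (Xᘁ ◁ η_ X Xᘁ ≫ (α_ _ _ _).inv ≫ ε_ X Xᘁ ▷ Xᘁ) ≫ (λ_ _).hom) := by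
        rw [ExactPairing.coevaluation_evaluation]; simp
    _ = 0 := by simp only [whiskerLeft_comp, hzero]; simp

lemma isZero_of_coevaluation_eq_zero {X Y : C} [ExactPairing X Y] (h : η_ X Y = 0) :
    IsZero X := by
  have := ExactPairing.evaluation_coevaluation X Y
  rw [h, MonoidalPreadditive.zero_whiskerRight, zero_comp] at this
  rw [IsZero.iff_id_eq_zero]
  simpa using ((λ_ X).inv ≫= this =≫ (ρ_ X).hom).symm

end Preadditive

section Abelian

variable {C : Type*} [Category C] [Abelian C] [MonoidalCategory C] [MonoidalPreadditive C]
  [RigidCategory C]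

lemma isZero_tensor_of_comp_eq_zero {U Q : C} (u : U ⟶ 𝟙_ C) (q : 𝟙_ C ⟶ Q) [Mono u] [Epi q]
    (h : u ≫ q = 0) : IsZero (U ⊗ Q) := by
  have : Mono (u ▷ Q) := (inferInstance : Mono ((tensorRight Q).map u))
  have : Epi (U ◁ q) := (inferInstance : Epi ((tensorLeft U).map q))
  have hcomp : U ◁ q ≫ u ▷ Q = 0 := by
    rw [whisker_exchange]; simp [unitors_equal, reassoc_of% h]
  exact IsZero.of_mono_eq_zero _ (zero_of_epi_comp _ hcomp)

lemma ShortComplex.ShortExact.isIso_g_whiskerRight {S : ShortComplex C} (hS : S.ShortExact)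
    (Y : C) (h : IsZero (S.X₁ ⊗ Y)) : IsIso (S.g ▷ Y) := by
  have hSY := hS.map_of_exact (tensorRight Y)
  have : Mono (S.g ▷ Y) := hSY.exact.mono_g (h.eq_of_src _ _)
  have : Epi (S.g ▷ Y) := hSY.epi_g
  exact isIso_of_mono_of_epi _

/-- For `U ↪ 𝟙` with cokernel `Q` we get `U ⊗ Qᘁ = 0`, so `𝟙 ⊗ Qᘁ ≅ Q ⊗ Qᘁ` and duality splits
`𝟙 ↠ Q`; the resulting idempotent of `𝟙` is `0` or `𝟙`. -/
lemma simple_tensorUnit [BraidedCategory C] (hC : ¬IsZero (𝟙_ C))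
    (hidem : ∀ e : 𝟙_ C ⟶ 𝟙_ C, e ≫ e = e → e = 0 ∨ e = 𝟙 _) : Simple (𝟙_ C) where
  mono_isIso_iff_nonzero {U} u _ := by
    refine ⟨fun _ hu => hC (IsZero.of_epi_eq_zero u hu), fun hu => ?_⟩
    let S := ShortComplex.mk u (cokernel.π u) (cokernel.condition u)
    have hS : S.ShortExact := { exact := S.exact_of_g_is_cokernel (cokernelIsCokernel u) }
    have hUQ := isZero_tensor_rightDual (isZero_tensor_of_comp_eq_zero u _ (cokernel.condition u))
    have := hS.isIso_g_whiskerRight _ hUQ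
    have := isSplitEpi_of_isSplitEpi_whiskerRight (Q' := (cokernel u)ᘁ) (cokernel.π u)
    rcases hidem (cokernel.π u ≫ section_ (cokernel.π u)) (by simp) with h | h
    · have hQ : IsZero (cokernel u) := by
        rw [IsZero.iff_id_eq_zero]
        calc 𝟙 _ = section_ (cokernel.π u) ≫ (cokernel.π u ≫ section_ (cokernel.π u)) ≫
              cokernel.π u := by simp
          _ = 0 := by rw [h]; simp
      have := Abelian.epi_of_cokernel_π_eq_zero u (hQ.eq_of_tgt _ _)
      exact isIso_of_mono_of_epi u
    · exact absurd (by simpa using (u ≫= h).symm) hu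

end Abelian

lemma Functor.Monoidal.isZero_of_isZero_obj {C D : Type*} [Category C] [Preadditive C]
    [HasKernels C] [MonoidalCategory C] [MonoidalPreadditive C] [Simple (𝟙_ C)]
    [Category D] [Preadditive D] [MonoidalCategory D] [MonoidalPreadditive D]
    (hD : ¬IsZero (𝟙_ D)) (F : C ⥤ D) [F.Monoidal] [F.PreservesMonomorphisms]
    {X : C} [HasRightDual X] (hX : IsZero (F.obj X)) : IsZero X := by
  by_contra hX'
  have : Mono (η_ X Xᘁ) :=
    mono_of_nonzero_from_simple fun h => hX' (isZero_of_coevaluation_eq_zero h)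
  have hXX : IsZero (F.obj (X ⊗ Xᘁ)) :=
    ((tensorRight (F.obj Xᘁ)).map_isZero hX).of_iso (Functor.Monoidal.μIso F X Xᘁ).symm
  exact hD ((IsZero.of_mono_eq_zero _ (hXX.eq_of_tgt (F.map (η_ X Xᘁ)) 0)).of_iso
    (Functor.Monoidal.εIso F))

lemma Functor.faithful_of_reflects_isZero {C D : Type*} [Category C] [Abelian C] [Category D]
    [Preadditive D] (F : C ⥤ D) [F.Additive] [F.PreservesMonomorphisms]
    [F.PreservesEpimorphisms] (hF : ∀ X, IsZero (F.obj X) → IsZero X) : F.Faithful := by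
  suffices h : ∀ {A B : C} (f : A ⟶ B), F.map f = 0 → f = 0 from
    ⟨fun hfg => sub_eq_zero.1 (h _ (by rw [F.map_sub, hfg, sub_self]))⟩
  intro A B f hf
  have hfac : F.map (Abelian.factorThruImage f) ≫ F.map (Abelian.image.ι f) = 0 := by
    rw [← F.map_comp, Abelian.image.fac, hf]
  have hI : IsZero (Abelian.image f) :=
    hF _ (IsZero.of_epi_eq_zero _ (zero_of_comp_mono _ hfac))
  rw [← Abelian.image.fac f, hI.eq_of_src (Abelian.image.ι f) 0, comp_zero]

section Retraction

variable {C D : Type*} [Category C] [Abelian C] [Category D] [Abelian D]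

lemma Functor.exists_lift_of_map_eq_comp_map (G : C ⥤ D) [G.Faithful] [G.PreservesZeroMorphisms]
    {A B Z : C} (m : A ⟶ Z) [Mono m] (f : B ⟶ Z) (t : G.obj B ⟶ G.obj A)
    (h : G.map f = t ≫ G.map m) : ∃ l : B ⟶ A, l ≫ m = f := by
  have hf : f ≫ cokernel.π m = 0 := G.map_injective <| by
    rw [G.map_comp, h, Category.assoc, ← G.map_comp, cokernel.condition, G.map_zero, comp_zero,
      G.map_zero]
  exact ⟨Abelian.monoLift m f hf, Abelian.monoLift_comp m f hf⟩

variable (F : D ⥤ C) (G : C ⥤ D) [G.Faithful] [G.Additive] [G.PreservesMonomorphisms]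

lemma Functor.essImage_of_mono (e : F ⋙ G ≅ 𝟭 D) {S T : C} (m : S ⟶ T) [Mono m]
    (hT : F.essImage T) :
    F.essImage S := by
  obtain ⟨X, ⟨i⟩⟩ := hT
  let m' := m ≫ i.inv
  let w : G.obj S ⟶ X := G.map m' ≫ e.hom.app X
  have hw : G.map (F.map w) = e.hom.app (G.obj S) ≫ G.map m' := by
    simpa [w] using e.hom.naturality w =≫ e.inv.app X
  obtain ⟨ψ, hψ⟩ := G.exists_lift_of_map_eq_comp_map m' (F.map w) _ hw
  have hGψ : G.map ψ = e.hom.app (G.obj S) :=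
    (cancel_mono (G.map m')).1 (by rw [← G.map_comp, hψ, hw])
  have : IsIso (G.map ψ) := hGψ ▸ inferInstance
  exact ⟨G.obj S, ⟨@asIso _ _ _ _ ψ (isIso_of_reflects_iso ψ G)⟩⟩

lemma Functor.isEquivalence_of_comp_iso_id [PreservesFiniteColimits F] (e : F ⋙ G ≅ 𝟭 D)
    (hF : ∀ Z : C, ∃ X : D, IsSubquotient Z (F.obj X)) : F.IsEquivalence := by
  have : F.Faithful := Functor.Faithful.of_comp_iso e
  have : F.Full := Functor.Full.of_comp_faithful_iso e
  have : F.EssSurj := ⟨fun Z => by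
    obtain ⟨X, S, i, p, _, _⟩ := hF Z
    have hS := F.essImage_of_mono G e i (F.obj_mem_essImage X)
    have hK := F.essImage_of_mono G e (kernel.ι p) hS
    exact F.essImage.prop_of_isColimit (Abelian.epiIsCokernelOfKernel _ (kernelIsKernel p))
      (by rintro (_ | _) <;> assumption)⟩
  exact { }

end Retraction

end CategoryTheory

namespace PreTannakian

variable {k : Type u} [Field k] (P : PreTannakian k)

lemma not_isZero_tensorUnit : ¬IsZero (𝟙_ P.C) := fun h =>
  one_ne_zero (P.endBij.1 (h.eq_of_src (1 • 𝟙 _) (0 • 𝟙 _)))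

lemma endUnit_idempotent_eq_zero_or_id {e : 𝟙_ P.C ⟶ 𝟙_ P.C} (he : e ≫ e = e) :
    e = 0 ∨ e = 𝟙 _ := by
  obtain ⟨a, rfl⟩ := P.endBij.2 e
  have ha : IsIdempotentElem a := P.endBij.1 (by simpa [smul_smul] using he)
  rcases IsIdempotentElem.iff_eq_zero_or_one.1 ha with rfl | rfl <;> simp

instance simple_tensorUnit : Simple (𝟙_ P.C) :=
  CategoryTheory.simple_tensorUnit P.not_isZero_tensorUnit fun _ =>
    P.endUnit_idempotent_eq_zero_or_id

end PreTannakian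

namespace TensorFunctor

variable {k : Type u} [Field k]

def id (C : PreTannakian k) : TensorFunctor C C where
  toFunctor := 𝟭 C.C

def comp {C D E : PreTannakian k} (F : TensorFunctor C D) (G : TensorFunctor D E) :
    TensorFunctor C E where
  toFunctor := F.toFunctor ⋙ G.toFunctor

instance faithful {C D : PreTannakian k} (F : TensorFunctor C D) : F.toFunctor.Faithful :=
  F.toFunctor.faithful_of_reflects_isZero fun _ =>
    Functor.Monoidal.isZero_of_isZero_obj D.not_isZero_tensorUnit F.toFunctor

end TensorFunctor

/-- Let `D` be a pretannakian category over `k` which is subterminal (tensor functors into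
`D` are unique up to monoidal natural isomorphism) and a Bezrukavnikov category (the class
of categories fibred over `D` is stable under surjective tensor functors). Then `D` is
incompressible: every surjective tensor functor out of `D` is an equivalence. -/
theorem incompressible_of_subterminal_of_bezrukavnikov
    {k : Type u} [Field k] (D : PreTannakian k)
    (hsub : ∀ (C : PreTannakian k) (F G : TensorFunctor C D),
      ∃ e : F.toFunctor ≅ G.toFunctor, NatTrans.IsMonoidal e.hom)
    (hbez : ∀ (C₁ C₂ : PreTannakian k) (F : TensorFunctor C₁ C₂),
      F.Surjective → TensorFunctor C₁ D → Nonempty (TensorFunctor C₂ D)) :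
    ∀ (C : PreTannakian k) (F : TensorFunctor D C),
      F.Surjective → F.toFunctor.IsEquivalence := by
  intro C F hF
  obtain ⟨G⟩ := hbez D C F hF (TensorFunctor.id D)
  obtain ⟨e, -⟩ := hsub D (F.comp G) (TensorFunctor.id D)
  exact F.toFunctor.isEquivalence_of_comp_iso_id G.toFunctor e hF
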